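/- Let (g_ι)_{ι<α} be a non-empty Cauchy sequence (indexed by an ordinal α) of total canonical term graphs in the metric space of total canonical term graphs with the rigid distance d†. Then (g_ι)_{ι<α} converges in this metric space and its limit equals its limit inferior liminf_{ι→α} g_ι computed in the complete semilattice of canonical partial term graphs ordered by ≤⊥r. -/

import Mathlib

set_option autoImplicit false

namespace TGR

/-- A signature: a type of symbols, each with a finite arity. -/
structure Signature where
  Sym : Type
  ar : Sym → ℕ

/-- The signature `Σ_⊥`: `Σ` extended by a fresh nullary symbol `⊥` (here `none`). -/
def Signature.bot (S : Signature) : Signature where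
  Sym := Option S.Sym
  ar := fun o => match o with
    | none => 0
    | some f => S.ar f

/-- A rooted graph over a signature `S` with nodes `N`: a labelling, a successor
function respecting arities, and a root node. -/
structure TermGraph (S : Signature) (N : Type) where
  lab : N → S.Sym
  suc : (n : N) → Fin (S.ar (lab n)) → N
  root : N

namespace TermGraph

variable {S : Signature} {N M K : Type}

/-- `g.IsPos π n`: `π` is a position (path of successor indices from the root) of node `n`. -/
inductive IsPos (g : TermGraph S N) : List ℕ → N → Prop
  | root : IsPos g [] g.root
  | step {π : List ℕ} {n : N} (h : IsPos g π n) (i : Fin (S.ar (g.lab n))) :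
      IsPos g (π ++ [(i : ℕ)]) (g.suc n i)

/-- All nodes are reachable from the root. -/
def Reachable (g : TermGraph S N) : Prop :=
  ∀ n : N, ∃ π : List ℕ, g.IsPos π n

/-- The set of positions of `g`. -/
def pos (g : TermGraph S N) : Set (List ℕ) :=
  {π | ∃ n : N, g.IsPos π n}

/-- The set of positions of node `n` in `g`. -/
def nodePos (g : TermGraph S N) (n : N) : Set (List ℕ) :=
  {π | g.IsPos π n}

/-- `π ∼_g π'`: `π` and `π'` are positions of the same node. -/
def Aliases (g : TermGraph S N) (π π' : List ℕ) : Prop :=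
  ∃ n : N, g.IsPos π n ∧ g.IsPos π' n

/-- A position is acyclic if it passes no node twice. -/
def IsAcyclicPos (g : TermGraph S N) (π : List ℕ) : Prop :=
  ∀ (π₁ π₂ : List ℕ) (n : N), π₁ <+: π₂ → π₂ <+: π →
    g.IsPos π₁ n → g.IsPos π₂ n → π₁ = π₂

/-- The set of acyclic positions of node `n` in `g`. -/
def nodePosAcy (g : TermGraph S N) (n : N) : Set (List ℕ) :=
  {π | g.IsPos π n ∧ g.IsAcyclicPos π}

/-- The set of acyclic positions of `g`. -/
def posAcy (g : TermGraph S N) : Set (List ℕ) :=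
  {π | (∃ n : N, g.IsPos π n) ∧ g.IsAcyclicPos π}

/-- The depth of a node: the minimal length of its positions. -/
noncomputable def depth (g : TermGraph S N) (n : N) : ℕ :=
  sInf {k : ℕ | ∃ π : List ℕ, g.IsPos π n ∧ π.length = k}

open Classical in
/-- The (unique) node at a position. -/
noncomputable def nodeAt (g : TermGraph S N) (π : List ℕ) : N :=
  if h : ∃ n : N, g.IsPos π n then h.choose else g.root

/-- The label `g(π)` at a position. -/
noncomputable def labAt (g : TermGraph S N) (π : List ℕ) : S.Sym :=
  g.lab (g.nodeAt π)

/-- `Δ`-homomorphism: root, labelling and successor conditions, the latter two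
suspended on `Δ`-labelled nodes. -/
structure IsDHom (Δ : Set S.Sym) (g : TermGraph S N) (h : TermGraph S M)
    (φ : N → M) : Prop where
  root_eq : φ g.root = h.root
  lab_eq : ∀ n : N, g.lab n ∉ Δ → h.lab (φ n) = g.lab n
  suc_eq : ∀ n : N, g.lab n ∉ Δ → ∀ (i : ℕ) (hi : i < S.ar (g.lab n))
      (hi' : i < S.ar (h.lab (φ n))),
      φ (g.suc n ⟨i, hi⟩) = h.suc (φ n) ⟨i, hi'⟩

/-- Rigidity: `Pa_g(n) = Pa_h(φ n)` for all non-`Δ`-labelled nodes `n`. -/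
def IsRigid (Δ : Set S.Sym) (g : TermGraph S N) (h : TermGraph S M)
    (φ : N → M) : Prop :=
  ∀ n : N, g.lab n ∉ Δ → g.nodePosAcy n = h.nodePosAcy (φ n)

/-- Rigid `Δ`-homomorphism. -/
def IsRigidDHom (Δ : Set S.Sym) (g : TermGraph S N) (h : TermGraph S M)
    (φ : N → M) : Prop :=
  IsDHom Δ g h φ ∧ IsRigid Δ g h φ

/-- Isomorphism of term graphs: a homomorphism with an inverse homomorphism. -/
def Iso (g : TermGraph S N) (h : TermGraph S M) : Prop :=
  ∃ (φ : N → M) (ψ : M → N), IsDHom ∅ g h φ ∧ IsDHom ∅ h g ψ ∧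
    (∀ n : N, ψ (φ n) = n) ∧ (∀ m : M, φ (ψ m) = m)

/-- A partial term graph (over `Σ_⊥`) is total if no node is labelled `⊥`. -/
def Total (g : TermGraph S.bot N) : Prop := ∀ n : N, g.lab n ≠ none

/-- Rigid `⊥`-homomorphism between partial term graphs. -/
def IsRigidBotHom (g : TermGraph S.bot N) (h : TermGraph S.bot M)
    (φ : N → M) : Prop :=
  IsRigidDHom ({none} : Set (Option S.Sym)) g h φ

/-- The `⊥`-depth of a partial term graph: the minimal depth of a `⊥`-labelled
node, `ω` (`⊤`) if there is none. -/
noncomputable def botDepth (g : TermGraph S.bot N) : ℕ∞ :=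
  sInf {d : ℕ∞ | ∃ n : N, g.lab n = none ∧ (g.depth n : ℕ∞) = d}

/-- `m` is an acyclic predecessor of `n`: some acyclic position `π ++ [i]` of `n`
has `π` a position of `m`. -/
def acyPred (g : TermGraph S N) (n : N) : Set N :=
  {m | ∃ (π : List ℕ) (i : ℕ), (π ++ [i]) ∈ g.nodePosAcy n ∧ g.IsPos π m}

/-- Retained nodes of the truncation at depth `d`: the least set of nodes
containing all nodes of depth `< d` and closed under acyclic predecessors. -/
inductive Retained (g : TermGraph S N) (d : ℕ) : N → Prop
  | shallow {n : N} : g.depth n < d → Retained g d n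
  | pred {n m : N} : Retained g d n → m ∈ g.acyPred n → Retained g d m

theorem not_retained_zero {g : TermGraph S N} (n : N) : ¬ g.Retained 0 n := by
  intro h
  induction h with
  | shallow hd => exact Nat.not_lt_zero _ hd
  | pred _ _ ih => exact ih

/-- Fringe nodes of the truncation at depth `d` (a pair `(n, i)` stands for the
fresh node `n^i`); at depth `0` the fringe is just (a copy of) the root. -/
def IsFringe (g : TermGraph S.bot N) (d : ℕ) (p : N × ℕ) : Prop :=
  if d = 0 then p = (g.root, 0)
  else g.Retained d p.1 ∧ ∃ h : p.2 < S.bot.ar (g.lab p.1),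
    (¬ g.Retained d (g.suc p.1 ⟨p.2, h⟩) ∨
      (d - 1 ≤ g.depth p.1 ∧ p.1 ∉ g.acyPred (g.suc p.1 ⟨p.2, h⟩)))

/-- The node set of the rigid truncation: retained nodes plus fringe nodes. -/
def TNode (g : TermGraph S.bot N) (d : ℕ) : Type :=
  {x : N ⊕ (N × ℕ) // Sum.elim (g.Retained d) (g.IsFringe d) x}

def truncLab (g : TermGraph S.bot N) (d : ℕ) (x : TNode g d) : S.bot.Sym :=
  Sum.elim (fun n => g.lab n) (fun _ => none) x.1

open Classical in
noncomputable def truncSuc (g : TermGraph S.bot N) (d : ℕ) :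
    (x : TNode g d) → Fin (S.bot.ar (truncLab g d x)) → TNode g d
  | ⟨Sum.inl n, hn⟩ => fun i =>
      if hf : g.IsFringe d (n, (i : ℕ)) then ⟨Sum.inr (n, (i : ℕ)), hf⟩
      else
        ⟨Sum.inl (g.suc n ⟨(i : ℕ), i.isLt⟩), by
          show g.Retained d (g.suc n ⟨(i : ℕ), i.isLt⟩)
          rcases Nat.eq_zero_or_pos d with hd | hd
          · subst hd
            exact ((not_retained_zero n) hn).elim
          · by_contra hc
            apply hf
            show g.IsFringe d (n, (i : ℕ))
            unfold IsFringe
            rw [if_neg (Nat.pos_iff_ne_zero.mp hd)]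
            exact ⟨hn, i.isLt, Or.inl hc⟩⟩
  | ⟨Sum.inr p, hp⟩ => fun i => absurd i.isLt (Nat.not_lt_zero _)

noncomputable def truncRoot (g : TermGraph S.bot N) (d : ℕ) : TNode g d :=
  if hd : d = 0 then
    ⟨Sum.inr (g.root, 0), by
      subst hd
      show g.IsFringe 0 (g.root, 0)
      simp [IsFringe]⟩
  else
    ⟨Sum.inl g.root, by
      show g.Retained d g.root
      exact Retained.shallow (lt_of_le_of_lt
        (Nat.sInf_le ⟨[], IsPos.root, rfl⟩) (Nat.pos_of_ne_zero hd))⟩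

/-- The rigid truncation `g†d` of a partial term graph at finite depth `d`. -/
noncomputable def trunc (g : TermGraph S.bot N) (d : ℕ) :
    TermGraph S.bot (TNode g d) where
  lab := truncLab g d
  suc := truncSuc g d
  root := truncRoot g d

end TermGraph

/-- A canonical term graph: a term graph whose nodes are sets of positions,
each node being exactly its set of positions, with all nodes reachable. -/
structure CTG (S : Signature) where
  nodes : Set (Set (List ℕ))
  tg : TermGraph S ↥nodes
  reach : tg.Reachable
  canon : ∀ n : ↥nodes, (n : Set (List ℕ)) = tg.nodePos n

namespace CTG

variable {S : Signature}

def pos (g : CTG S) : Set (List ℕ) := g.tg.pos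
def Aliases (g : CTG S) : List ℕ → List ℕ → Prop := g.tg.Aliases
def posAcy (g : CTG S) : Set (List ℕ) := g.tg.posAcy
noncomputable def labAt (g : CTG S) : List ℕ → S.Sym := g.tg.labAt

/-- A canonical partial term graph is total if it has no `⊥`-labelled node. -/
def Total (g : CTG S.bot) : Prop := g.tg.Total

/-- The rigid partial order `g ≤⊥r h`: there is a rigid `⊥`-homomorphism
from `g` to `h`. -/
def LeR (g h : CTG S.bot) : Prop :=
  ∃ φ, TermGraph.IsRigidBotHom g.tg h.tg φ

noncomputable def botDepth (g : CTG S.bot) : ℕ∞ := g.tg.botDepth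

/-- `TruncIso g h d`: the rigid truncations of `g` and `h` at depth `d ≤ ω`
are isomorphic (`g†ω = g`). -/
def TruncIso {N M : Type} (g : TermGraph S.bot N) (h : TermGraph S.bot M)
    (d : ℕ∞) : Prop :=
  (d = ⊤ → TermGraph.Iso g h) ∧
  ∀ k : ℕ, d = (k : ℕ∞) → TermGraph.Iso (g.trunc k) (h.trunc k)

/-- The rigid similarity `sim†(g,h)`: the maximal `d ≤ ω` such that
`g†d ≅ h†d`. -/
noncomputable def simr (g h : CTG S.bot) : ℕ∞ :=
  sSup {d : ℕ∞ | TruncIso g.tg h.tg d}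

open Classical in
/-- The rigid distance `d†(g,h) = 2^{-sim†(g,h)}` (with `2^{-ω} = 0`). -/
noncomputable def rdist (g h : CTG S.bot) : ℝ :=
  if simr g h = ⊤ then 0 else (1 / 2 : ℝ) ^ (simr g h).toNat

def IsUB (A : Set (CTG S.bot)) (u : CTG S.bot) : Prop := ∀ g ∈ A, LeR g u

def IsLubR (A : Set (CTG S.bot)) (u : CTG S.bot) : Prop :=
  IsUB A u ∧ ∀ v, IsUB A v → LeR u v

def IsLB (A : Set (CTG S.bot)) (l : CTG S.bot) : Prop := ∀ g ∈ A, LeR l g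

def IsGlbR (A : Set (CTG S.bot)) (l : CTG S.bot) : Prop :=
  IsLB A l ∧ ∀ m, IsLB A m → LeR m l

/-- A directed set: non-empty and every two elements have an upper bound inside. -/
def DirectedR (A : Set (CTG S.bot)) : Prop :=
  A.Nonempty ∧ ∀ g ∈ A, ∀ h ∈ A, ∃ u ∈ A, LeR g u ∧ LeR h u

/-- `L` is the limit inferior `⨆_{β<α} ⨅_{β≤ι<α} f ι` of the ordinal-indexed
sequence `(f ι)_{ι<α}` in the rigid partial order. -/
def IsLiminfR (α : Ordinal.{0}) (f : Ordinal.{0} → CTG S.bot) (L : CTG S.bot) : Prop :=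
  ∃ inf : Ordinal.{0} → CTG S.bot,
    (∀ β < α, IsGlbR {g | ∃ ι, β ≤ ι ∧ ι < α ∧ g = f ι} (inf β)) ∧
    IsLubR {g | ∃ β < α, g = inf β} L

/-- Cauchy condition for an ordinal-indexed sequence w.r.t. the rigid distance. -/
def OrdCauchy (α : Ordinal.{0}) (f : Ordinal.{0} → CTG S.bot) : Prop :=
  ∀ ε : ℝ, 0 < ε → ∃ β < α, ∀ ι ι' : Ordinal.{0},
    β < ι → ι < ι' → ι' < α → rdist (f ι) (f ι') < ε

/-- Convergence of an ordinal-indexed sequence to `g` w.r.t. the rigid distance. -/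
def OrdTendsto (α : Ordinal.{0}) (f : Ordinal.{0} → CTG S.bot) (g : CTG S.bot) : Prop :=
  ∀ ε : ℝ, 0 < ε → ∃ β < α, ∀ ι : Ordinal.{0}, β < ι → ι < α → rdist (f ι) g < ε

/-- `u` is the unravelling of `g`: the term tree with the same positions and
labels as `g` and trivial aliasing. -/
def IsUnravelling (g u : CTG S) : Prop :=
  u.pos = g.pos ∧ (∀ π ∈ g.pos, u.labAt π = g.labAt π) ∧
  (∀ π π' : List ℕ, u.Aliases π π' ↔ (π ∈ g.pos ∧ π = π'))

end CTG

/-- A labelled quotient tree over a signature `S`. -/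
structure LQT (S : Signature) where
  P : Set (List ℕ)
  nonempty : P.Nonempty
  l : List ℕ → S.Sym
  rel : List ℕ → List ℕ → Prop
  rel_refl : ∀ π ∈ P, rel π π
  rel_symm : ∀ π π' : List ℕ, rel π π' → rel π' π
  rel_trans : ∀ π π' π'' : List ℕ, rel π π' → rel π' π'' → rel π π''
  rel_mem : ∀ π π' : List ℕ, rel π π' → π ∈ P ∧ π' ∈ P
  reach_mem : ∀ (π : List ℕ) (i : ℕ), π ++ [i] ∈ P → π ∈ P
  reach_ar : ∀ (π : List ℕ) (i : ℕ), π ++ [i] ∈ P → i < S.ar (l π)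
  congr_lab : ∀ π π' : List ℕ, rel π π' → l π = l π'
  congr_suc : ∀ (π π' : List ℕ) (i : ℕ), rel π π' → i < S.ar (l π) →
    rel (π ++ [i]) (π' ++ [i])

end TGR

/-!
For a total term graph `g`, the truncation `g†k` is (up to isomorphism) a canonical partial
term graph below `g` in `≤⊥r` all of whose `⊥`-nodes lie at depth `≥ k`; and a rigid
`⊥`-homomorphism `g → h` whose domain has no `⊥`-node above depth `k` induces an isomorphism
`g†k ≅ h†k`. For a Cauchy sequence, from some index `β` on all truncations `(f ι)†k` are
isomorphic, so `(f β)†k` is a lower bound of the tail and lies below its infimum, which in turn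
lies below every `f ι` of the tail and below the limit inferior `L`. Hence `L` has no `⊥`-node
above depth `k` for any `k`, so it is total, and `(f ι)†k ≅ L†k` on the tail, i.e.
`d†(f ι, L) ≤ 2^{-k}`.
-/

namespace TGR
namespace TermGraph

section Positions

variable {S : Signature} {N : Type} {g : TermGraph S N}

theorem isPos_cases {π : List ℕ} {n : N} (h : g.IsPos π n) :
    (π = [] ∧ n = g.root) ∨
      ∃ (π' : List ℕ) (m : N) (i : Fin (S.ar (g.lab m))),
        π = π' ++ [(i : ℕ)] ∧ g.IsPos π' m ∧ n = g.suc m i := by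
  cases h with
  | root => exact Or.inl ⟨rfl, rfl⟩
  | step h i => exact Or.inr ⟨_, _, i, rfl, h, rfl⟩

theorem IsPos.eq_root {n : N} (h : g.IsPos [] n) : n = g.root := by
  rcases isPos_cases h with ⟨_, rfl⟩ | ⟨_, _, _, he, _, _⟩
  · rfl
  · simp at he

theorem IsPos.exists_of_snoc {π : List ℕ} {i : ℕ} {m : N} (h : g.IsPos (π ++ [i]) m) :
    ∃ (n : N) (hi : i < S.ar (g.lab n)), g.IsPos π n ∧ m = g.suc n ⟨i, hi⟩ := by
  rcases isPos_cases h with ⟨he, _⟩ | ⟨π', n, j, he, hp, hm⟩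
  · simp at he
  · obtain ⟨rfl, hij⟩ := List.append_inj' he rfl
    obtain rfl : i = (j : ℕ) := by simpa using hij
    exact ⟨n, j.isLt, hp, hm⟩

theorem IsPos.unique {π : List ℕ} {n m : N} (hn : g.IsPos π n) (hm : g.IsPos π m) : n = m := by
  induction π using List.reverseRecOn generalizing n m with
  | nil => rw [hn.eq_root, hm.eq_root]
  | append_singleton π i ih =>
      obtain ⟨x, _, hx, rfl⟩ := hn.exists_of_snoc
      obtain ⟨y, _, hy, rfl⟩ := hm.exists_of_snoc
      cases ih hx hy
      rfl

theorem IsPos.exists_of_prefix {π π' : List ℕ} {m : N} (h : g.IsPos π m) (hpre : π' <+: π) :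
    ∃ n, g.IsPos π' n := by
  obtain ⟨ρ, rfl⟩ := hpre
  induction ρ using List.reverseRecOn generalizing m with
  | nil => exact ⟨m, by simpa using h⟩
  | append_singleton ρ i ih =>
      rw [← List.append_assoc] at h
      obtain ⟨x, _, hx, _⟩ := h.exists_of_snoc
      exact ih hx

theorem isPos_transplant {π₁ π₂ ρ : List ℕ} {n m : N} (h₁ : g.IsPos π₁ n)
    (h₂ : g.IsPos π₂ n) (h : g.IsPos (π₁ ++ ρ) m) : g.IsPos (π₂ ++ ρ) m := by
  induction ρ using List.reverseRecOn generalizing m with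
  | nil =>
      rw [List.append_nil] at h ⊢
      rwa [h.unique h₁]
  | append_singleton ρ i ih =>
      rw [← List.append_assoc] at h ⊢
      obtain ⟨x, hx, hpx, rfl⟩ := h.exists_of_snoc
      exact (ih hpx).step ⟨i, hx⟩

theorem IsPos.ar_pos_of_prefix {π π' : List ℕ} {m x : N} (h : g.IsPos π m) (hpre : π' <+: π)
    (hne : π' ≠ π) (hx : g.IsPos π' x) : 0 < S.ar (g.lab x) := by
  obtain ⟨_ | ⟨j, ρ⟩, rfl⟩ := hpre
  · simp at hne
  · have hpre' : π' ++ [j] <+: π' ++ j :: ρ := ⟨ρ, by simp⟩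
    obtain ⟨y, hy⟩ := h.exists_of_prefix hpre'
    obtain ⟨x', hj, hx', _⟩ := hy.exists_of_snoc
    rw [hx.unique hx']
    exact (Nat.zero_le j).trans_lt hj

theorem depth_le_length {π : List ℕ} {n : N} (h : g.IsPos π n) : g.depth n ≤ π.length :=
  Nat.sInf_le ⟨π, h, rfl⟩

theorem exists_isPos_length_eq_depth {n : N} (h : ∃ π, g.IsPos π n) :
    ∃ π, g.IsPos π n ∧ π.length = g.depth n := by
  obtain ⟨π, hπ⟩ := h
  exact Nat.sInf_mem (s := {k | ∃ π, g.IsPos π n ∧ π.length = k})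
    ⟨π.length, π, hπ, rfl⟩

theorem depth_suc_le {n : N} (h : ∃ π, g.IsPos π n) (i : Fin (S.ar (g.lab n))) :
    g.depth (g.suc n i) ≤ g.depth n + 1 := by
  obtain ⟨π, hπ, hl⟩ := exists_isPos_length_eq_depth h
  simpa [hl] using depth_le_length (hπ.step i)

theorem IsAcyclicPos.of_prefix {π π' : List ℕ} (h : g.IsAcyclicPos π) (hpre : π' <+: π) :
    g.IsAcyclicPos π' :=
  fun π₁ π₂ n h12 h2 => h π₁ π₂ n h12 (h2.trans hpre)

theorem isAcyclicPos_of_length_eq_depth {π : List ℕ} {n : N} (h : g.IsPos π n)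
    (hmin : π.length = g.depth n) : g.IsAcyclicPos π := by
  intro π₁ π₂ m h12 h2π hp1 hp2
  obtain ⟨σ, rfl⟩ := h12
  obtain ⟨ρ, rfl⟩ := h2π
  -- cutting out the cycle `σ` gives a shorter position of `n`
  have hlen := depth_le_length (isPos_transplant hp2 hp1 h)
  simp only [List.length_append] at hlen hmin
  have : σ.length = 0 := by omega
  simp [List.length_eq_zero_iff.mp this]

theorem exists_mem_nodePosAcy {n : N} (h : ∃ π, g.IsPos π n) :
    ∃ π, π ∈ g.nodePosAcy n ∧ π.length = g.depth n := by
  obtain ⟨π, hπ, hl⟩ := exists_isPos_length_eq_depth h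
  exact ⟨π, ⟨hπ, isAcyclicPos_of_length_eq_depth hπ hl⟩, hl⟩

theorem eq_of_nodePosAcy_eq {n m : N} (h : g.nodePosAcy n = g.nodePosAcy m)
    (hn : ∃ π, g.IsPos π n) : n = m := by
  obtain ⟨π, hπ, _⟩ := exists_mem_nodePosAcy hn
  exact hπ.1.unique (h ▸ hπ).1

theorem IsAcyclicPos.snoc_swap {π : List ℕ} {i j : ℕ} {m : N}
    (hacy : g.IsAcyclicPos (π ++ [j])) (hj : g.IsPos (π ++ [j]) m) (hi : g.IsPos (π ++ [i]) m) :
    g.IsAcyclicPos (π ++ [i]) := by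
  intro π₁ π₂ z pre12 pre2 hz1 hz2
  rcases List.prefix_concat_iff.mp pre2 with rfl | hpre2
  · rcases List.prefix_concat_iff.mp pre12 with rfl | hpre1
    · rfl
    · have := hacy π₁ (π ++ [j]) z (hpre1.trans (by simp)) (by rfl) hz1 (hz2.unique hi ▸ hj)
      have hlen := hpre1.length_le
      simp [this] at hlen
  · exact hacy π₁ π₂ z pre12 (hpre2.trans (by simp)) hz1 hz2

theorem exists_of_mem_acyPred {n m : N} (h : m ∈ g.acyPred n) :
    ∃ (π : List ℕ) (i : ℕ) (hi : i < S.ar (g.lab m)),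
      g.IsPos π m ∧ n = g.suc m ⟨i, hi⟩ ∧ π ++ [i] ∈ g.nodePosAcy n := by
  obtain ⟨π, i, hmem, hm⟩ := h
  obtain ⟨x, hi, hx, hn⟩ := hmem.1.exists_of_snoc
  obtain rfl := hx.unique hm
  exact ⟨π, i, hi, hm, hn, hmem⟩

end Positions

section Homomorphisms

variable {S : Signature} {N M K : Type}

theorem ne_none_of_ar_pos {o : Option S.Sym} (h : 0 < S.bot.ar o) : o ≠ none := by
  rintro rfl
  exact absurd h (Nat.lt_irrefl 0)

theorem suc_congr {g : TermGraph S N} {n n' : N} (he : n = n') {i : ℕ}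
    (hi : i < S.ar (g.lab n)) (hi' : i < S.ar (g.lab n')) :
    g.suc n ⟨i, hi⟩ = g.suc n' ⟨i, hi'⟩ := by
  subst he
  rfl

theorem IsDHom.mono {Δ : Set S.Sym} {g : TermGraph S N} {h : TermGraph S M} {φ : N → M}
    (hφ : IsDHom ∅ g h φ) : IsDHom Δ g h φ where
  root_eq := hφ.root_eq
  lab_eq n _ := hφ.lab_eq n (Set.notMem_empty _)
  suc_eq n _ := hφ.suc_eq n (Set.notMem_empty _)

theorem IsDHom.comp {g : TermGraph S N} {h : TermGraph S M} {k : TermGraph S K}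
    {φ : N → M} {ψ : M → K} (hφ : IsDHom ∅ g h φ) (hψ : IsDHom ∅ h k ψ) :
    IsDHom ∅ g k (ψ ∘ φ) where
  root_eq := by simp only [Function.comp_apply, hφ.root_eq, hψ.root_eq]
  lab_eq n _ := by
    simp only [Function.comp_apply, hψ.lab_eq (φ n) (Set.notMem_empty _),
      hφ.lab_eq n (Set.notMem_empty _)]
  suc_eq n _ i hi hi' := by
    have him : i < S.ar (h.lab (φ n)) := by rwa [hφ.lab_eq n (Set.notMem_empty _)]
    simp only [Function.comp_apply, hφ.suc_eq n (Set.notMem_empty _) i hi him,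
      hψ.suc_eq (φ n) (Set.notMem_empty _) i him hi']

theorem Iso.refl (g : TermGraph S N) : Iso g g :=
  ⟨id, id, ⟨rfl, fun _ _ => rfl, fun _ _ _ _ _ => rfl⟩,
    ⟨rfl, fun _ _ => rfl, fun _ _ _ _ _ => rfl⟩, fun _ => rfl, fun _ => rfl⟩

theorem Iso.symm {g : TermGraph S N} {h : TermGraph S M} (hi : Iso g h) : Iso h g :=
  let ⟨φ, ψ, hφ, hψ, hψφ, hφψ⟩ := hi
  ⟨ψ, φ, hψ, hφ, hφψ, hψφ⟩

theorem Iso.trans {g : TermGraph S N} {h : TermGraph S M} {k : TermGraph S K}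
    (h₁ : Iso g h) (h₂ : Iso h k) : Iso g k := by
  obtain ⟨φ₁, ψ₁, hφ₁, hψ₁, l₁, r₁⟩ := h₁
  obtain ⟨φ₂, ψ₂, hφ₂, hψ₂, l₂, r₂⟩ := h₂
  exact ⟨φ₂ ∘ φ₁, ψ₁ ∘ ψ₂, hφ₁.comp hφ₂, hψ₂.comp hψ₁,
    fun n => by simp [l₁, l₂], fun m => by simp [r₁, r₂]⟩

theorem IsDHom.iso_of_bijective {g : TermGraph S N} {h : TermGraph S M} {φ : N → M}
    (hφ : IsDHom ∅ g h φ) (hb : Function.Bijective φ) : Iso g h := by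
  let e := Equiv.ofBijective φ hb
  refine ⟨φ, e.symm, hφ, ⟨?_, fun m _ => ?_, fun m _ i hi hi' => ?_⟩,
    e.symm_apply_apply, e.apply_symm_apply⟩
  · rw [← hφ.root_eq]
    exact e.symm_apply_apply _
  · have := hφ.lab_eq (e.symm m) (Set.notMem_empty _)
    rwa [show φ (e.symm m) = m from e.apply_symm_apply m, eq_comm] at this
  · apply e.injective
    have hi'' : i < S.ar (h.lab (φ (e.symm m))) := by
      rwa [show φ (e.symm m) = m from e.apply_symm_apply m]
    rw [Equiv.apply_symm_apply, show e _ = φ _ from rfl,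
      hφ.suc_eq _ (Set.notMem_empty _) i hi' hi'']
    exact suc_congr (e.apply_symm_apply m).symm _ _

abbrev IsBotHom (g : TermGraph S.bot N) (h : TermGraph S.bot M) (φ : N → M) : Prop :=
  IsDHom ({none} : Set (Option S.Sym)) g h φ

variable {g : TermGraph S.bot N} {h : TermGraph S.bot M} {φ : N → M}

theorem IsDHom.isPos (hφ : IsBotHom g h φ) {π : List ℕ} {n : N} (hp : g.IsPos π n) :
    h.IsPos π (φ n) := by
  induction hp with
  | root => rw [hφ.root_eq]; exact .root
  | @step π n _ i ih =>
      have hn : g.lab n ≠ none := ne_none_of_ar_pos i.pos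
      have hi : (i : ℕ) < S.bot.ar (h.lab (φ n)) := by rw [hφ.lab_eq n hn]; exact i.isLt
      rw [hφ.suc_eq n hn i i.isLt hi]
      exact ih.step ⟨i, hi⟩

theorem IsDHom.isPos_or_bot (hφ : IsBotHom g h φ) {π : List ℕ} {m : M}
    (hp : h.IsPos π m) : (∃ n, g.IsPos π n ∧ φ n = m) ∨
      ∃ (π' : List ℕ) (n : N), π' <+: π ∧ g.IsPos π' n ∧ g.lab n = none := by
  induction hp with
  | root => exact Or.inl ⟨g.root, .root, hφ.root_eq⟩
  | @step π m _ i ih =>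
      rcases ih with ⟨n, hn, rfl⟩ | ⟨π', n, hpre, hn, hnone⟩
      · by_cases hc : g.lab n = none
        · exact Or.inr ⟨π, n, List.prefix_append _ _, hn, hc⟩
        · have hi : (i : ℕ) < S.bot.ar (g.lab n) := by rw [← hφ.lab_eq n hc]; exact i.isLt
          exact Or.inl ⟨_, hn.step ⟨i, hi⟩, hφ.suc_eq n hc i hi i.isLt⟩
      · exact Or.inr ⟨π', n, hpre.trans (List.prefix_append _ _), hn, hnone⟩

theorem botDepth_le_depth {n : N} (h : g.lab n = none) : g.botDepth ≤ g.depth n :=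
  sInf_le ⟨n, h, rfl⟩

theorem IsDHom.botDepth_le (hφ : IsBotHom g h φ) (hh : h.Reachable) :
    g.botDepth ≤ h.botDepth := by
  refine le_sInf ?_
  rintro _ ⟨m, hm, rfl⟩
  obtain ⟨π, hπ, hlen⟩ := exists_isPos_length_eq_depth (hh m)
  rcases hφ.isPos_or_bot hπ with ⟨n, hn, rfl⟩ | ⟨π', n, hpre, hn, hnone⟩
  · have hnone : g.lab n = none := by
      by_contra hc
      exact hc ((hφ.lab_eq n hc).symm.trans hm)
    refine (botDepth_le_depth hnone).trans ?_
    exact_mod_cast hlen ▸ depth_le_length hn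
  · refine (botDepth_le_depth hnone).trans ?_
    exact_mod_cast hlen ▸ (depth_le_length hn).trans hpre.length_le

theorem le_botDepth_of_forall {n : ℕ∞} (hd : ∀ m : N, g.lab m = none → n ≤ g.depth m) :
    n ≤ g.botDepth :=
  le_sInf fun _ ⟨m, hm, he⟩ => he ▸ hd m hm

theorem total_of_forall_le_botDepth (h : ∀ k : ℕ, k ≠ 0 → (k : ℕ∞) ≤ g.botDepth) :
    g.Total := by
  intro n hn
  have := (h (g.depth n + 1) (Nat.succ_ne_zero _)).trans (botDepth_le_depth hn)
  exact absurd (ENat.natCast_le_natCast.mp this) (Nat.not_succ_le_self _)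

theorem lab_ne_none_of_isPos_prefix {π π' : List ℕ} {n x : N} (hπ : g.IsPos π n)
    (hn : g.lab n ≠ none) (hpre : π' <+: π) (hx : g.IsPos π' x) : g.lab x ≠ none := by
  by_cases he : π' = π
  · subst he
    rwa [hx.unique hπ]
  · exact ne_none_of_ar_pos (hπ.ar_pos_of_prefix hpre he hx)

theorem IsDHom.isAcyclicPos_of_codomain (hφ : IsBotHom g h φ) {π : List ℕ}
    (hacy : h.IsAcyclicPos π) : g.IsAcyclicPos π :=
  fun π₁ π₂ z pre12 pre2 hz1 hz2 =>
    hacy π₁ π₂ (φ z) pre12 pre2 (hφ.isPos hz1) (hφ.isPos hz2)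

theorem IsDHom.isAcyclicPos_of_injOn (hφ : IsBotHom g h φ)
    (hinj : Set.InjOn φ {x | g.lab x ≠ none}) {π : List ℕ} {n : N} (hπ : g.IsPos π n)
    (hn : g.lab n ≠ none) (hacy : g.IsAcyclicPos π) : h.IsAcyclicPos π := by
  intro π₁ π₂ z pre12 pre2 hz1 hz2
  obtain ⟨x₁, hx₁⟩ := hπ.exists_of_prefix (pre12.trans pre2)
  obtain ⟨x₂, hx₂⟩ := hπ.exists_of_prefix pre2
  have hx : x₁ = x₂ :=
    hinj (lab_ne_none_of_isPos_prefix hπ hn (pre12.trans pre2) hx₁)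
      (lab_ne_none_of_isPos_prefix hπ hn pre2 hx₂)
      (((hφ.isPos hx₁).unique hz1).trans ((hφ.isPos hx₂).unique hz2).symm)
  exact hacy π₁ π₂ x₁ pre12 pre2 hx₁ (hx ▸ hx₂)

theorem IsRigidBotHom.comp {k : TermGraph S.bot K} {ψ : M → K} (hφ : IsRigidBotHom g h φ)
    (hψ : IsRigidBotHom h k ψ) : IsRigidBotHom g k (ψ ∘ φ) := by
  have hlab : ∀ n, g.lab n ≠ none → h.lab (φ n) ≠ none := fun n hn => by
    rwa [hφ.1.lab_eq n hn]
  refine ⟨⟨?_, fun n hn => ?_, fun n hn i hi hi' => ?_⟩, fun n hn => ?_⟩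
  · simp only [Function.comp_apply, hφ.1.root_eq, hψ.1.root_eq]
  · simp only [Function.comp_apply, hψ.1.lab_eq (φ n) (hlab n hn), hφ.1.lab_eq n hn]
  · have him : i < S.bot.ar (h.lab (φ n)) := by rwa [hφ.1.lab_eq n hn]
    simp only [Function.comp_apply, hφ.1.suc_eq n hn i hi him,
      hψ.1.suc_eq (φ n) (hlab n hn) i him hi']
  · rw [hφ.2 n hn, hψ.2 (φ n) (hlab n hn), Function.comp_apply]

theorem Iso.exists_isRigidBotHom (hiso : Iso g h) : ∃ φ : N → M, IsRigidBotHom g h φ := by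
  obtain ⟨φ, ψ, hφ, hψ, hψφ, -⟩ := hiso
  refine ⟨φ, hφ.mono, fun n _ => Set.ext fun π =>
    ⟨fun ⟨hp, hacy⟩ => ?_, fun ⟨hp, hacy⟩ => ?_⟩⟩
  · exact ⟨hφ.mono.isPos hp, hψ.mono.isAcyclicPos_of_codomain hacy⟩
  · exact ⟨hψφ n ▸ hψ.mono.isPos hp, hφ.mono.isAcyclicPos_of_codomain hacy⟩

end Homomorphisms

section Truncation

variable {S : Signature} {N : Type} {g : TermGraph S.bot N} {d : ℕ}

theorem isFringe_iff (hd : d ≠ 0) {p : N × ℕ} :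
    g.IsFringe d p ↔ g.Retained d p.1 ∧ ∃ h : p.2 < S.bot.ar (g.lab p.1),
      (¬ g.Retained d (g.suc p.1 ⟨p.2, h⟩) ∨
        (d - 1 ≤ g.depth p.1 ∧ p.1 ∉ g.acyPred (g.suc p.1 ⟨p.2, h⟩))) := by
  rw [IsFringe, if_neg hd]

theorem retained_root (hd : d ≠ 0) : g.Retained d g.root :=
  .shallow ((depth_le_length IsPos.root).trans_lt (Nat.pos_of_ne_zero hd))

theorem le_depth_of_lab_eq_none (hbot : (d : ℕ∞) ≤ g.botDepth) {n : N} (he : g.lab n = none) :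
    d ≤ g.depth n := by
  exact_mod_cast hbot.trans (botDepth_le_depth he)

theorem Retained.lab_ne_none (hbot : (d : ℕ∞) ≤ g.botDepth) {n : N} (h : g.Retained d n) :
    g.lab n ≠ none := by
  induction h with
  | shallow hdep => exact fun he => absurd (le_depth_of_lab_eq_none hbot he) (not_le.mpr hdep)
  | pred _ hm _ =>
      obtain ⟨_, i, hi, -⟩ := exists_of_mem_acyPred hm
      exact ne_none_of_ar_pos ((Nat.zero_le i).trans_lt hi)

theorem IsFringe.le_depth_add_one (hd : d ≠ 0) {n : N} {i : ℕ} (hf : g.IsFringe d (n, i))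
    (hn : ∃ π, g.IsPos π n) : d ≤ g.depth n + 1 := by
  obtain ⟨_, hi, hnr | ⟨hdep, _⟩⟩ := (isFringe_iff hd).mp hf
  · dsimp only at hi hnr
    have := depth_suc_le hn ⟨i, hi⟩
    by_contra hlt
    exact hnr (.shallow (by omega))
  · dsimp only at hdep
    omega

-- the `else` branch is junk: every fringe pair `(n, i)` has `i < ar (lab n)`
open Classical in
noncomputable def truncHom (g : TermGraph S.bot N) (d : ℕ) : TNode g d → N
  | ⟨Sum.inl n, _⟩ => n
  | ⟨Sum.inr p, _⟩ => if h : p.2 < S.bot.ar (g.lab p.1) then g.suc p.1 ⟨p.2, h⟩ else g.root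

theorem trunc_root_eq (hd : d ≠ 0) : (g.trunc d).root = ⟨Sum.inl g.root, retained_root hd⟩ :=
  dif_neg hd

theorem trunc_suc_of_isFringe {n : N} {hn : Sum.elim (g.Retained d) (g.IsFringe d) (Sum.inl n)}
    {i : Fin (S.bot.ar ((g.trunc d).lab ⟨Sum.inl n, hn⟩))} (hf : g.IsFringe d (n, i)) :
    (g.trunc d).suc ⟨Sum.inl n, hn⟩ i = ⟨Sum.inr (n, i), hf⟩ :=
  dif_pos hf

theorem trunc_suc_of_not_isFringe {n : N}
    {hn : Sum.elim (g.Retained d) (g.IsFringe d) (Sum.inl n)}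
    {i : Fin (S.bot.ar ((g.trunc d).lab ⟨Sum.inl n, hn⟩))} (hf : ¬ g.IsFringe d (n, i)) :
    ∃ hs, (g.trunc d).suc ⟨Sum.inl n, hn⟩ i = ⟨Sum.inl (g.suc n ⟨i, i.isLt⟩), hs⟩ :=
  ⟨_, dif_neg hf⟩

theorem TNode.exists_eq_inl_of_ar_pos {x : TNode g d} (h : 0 < S.bot.ar ((g.trunc d).lab x)) :
    ∃ (n : N) (hn : Sum.elim (g.Retained d) (g.IsFringe d) (Sum.inl n)),
      x = ⟨Sum.inl n, hn⟩ := by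
  obtain ⟨n | p, hx⟩ := x
  · exact ⟨n, hx, rfl⟩
  · exact absurd h (Nat.lt_irrefl 0)

theorem truncHom_isBotHom (g : TermGraph S.bot N) (hd : d ≠ 0) :
    IsBotHom (g.trunc d) g (truncHom g d) := by
  refine ⟨by rw [trunc_root_eq hd]; rfl, ?_, ?_⟩
  · rintro ⟨n | p, hx⟩ hlab
    · rfl
    · exact absurd rfl hlab
  · rintro ⟨n | p, hx⟩ hlab i hi hi'
    · by_cases hf : g.IsFringe d (n, i)
      · rw [trunc_suc_of_isFringe (i := ⟨i, hi⟩) hf]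
        exact dif_pos hi'
      · obtain ⟨_, heq⟩ := trunc_suc_of_not_isFringe (i := ⟨i, hi⟩) hf
        rw [heq]
        rfl
    · exact absurd rfl hlab

theorem truncHom_injOn : Set.InjOn (truncHom g d) {x | (g.trunc d).lab x ≠ none} := by
  rintro ⟨n | p, hx⟩ hx' ⟨m | q, hy⟩ hy' he
  · cases he
    rfl
  · exact absurd rfl hy'
  · exact absurd rfl hx'
  · exact absurd rfl hx'

theorem isPos_trunc_of_isAcyclicPos (hd : d ≠ 0) {π : List ℕ} {n : N} (hn : g.Retained d n)
    (hp : g.IsPos π n) (hacy : g.IsAcyclicPos π) : (g.trunc d).IsPos π ⟨Sum.inl n, hn⟩ := by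
  induction π using List.reverseRecOn generalizing n with
  | nil =>
      obtain rfl := hp.eq_root
      rw [← trunc_root_eq hd]
      exact .root
  | append_singleton π i ih =>
      obtain ⟨x, hi, hpx, rfl⟩ := hp.exists_of_snoc
      have hxpred : x ∈ g.acyPred (g.suc x ⟨i, hi⟩) := ⟨π, i, ⟨hp, hacy⟩, hpx⟩
      have hxret : g.Retained d x := hn.pred hxpred
      have hnf : ¬ g.IsFringe d (x, i) := by
        rintro hf
        obtain ⟨_, _, hnr | ⟨_, hnp⟩⟩ := (isFringe_iff hd).mp hf
        exacts [hnr hn, hnp hxpred]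
      have hstep := (ih hxret hpx (hacy.of_prefix ⟨[i], rfl⟩)).step ⟨i, hi⟩
      obtain ⟨_, heq⟩ := trunc_suc_of_not_isFringe (hn := hxret) (i := ⟨i, hi⟩) hnf
      rw [heq] at hstep
      exact hstep

theorem trunc_nodePosAcy (hd : d ≠ 0) {n : N} (hn : g.Retained d n) (hn' : g.lab n ≠ none) :
    (g.trunc d).nodePosAcy ⟨Sum.inl n, hn⟩ = g.nodePosAcy n := by
  have hφ := truncHom_isBotHom g hd
  ext π
  constructor
  · rintro ⟨hp, hacy⟩
    exact ⟨hφ.isPos hp, hφ.isAcyclicPos_of_injOn truncHom_injOn hp hn' hacy⟩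
  · rintro ⟨hp, hacy⟩
    exact ⟨isPos_trunc_of_isAcyclicPos hd hn hp hacy, hφ.isAcyclicPos_of_codomain hacy⟩

theorem truncHom_isRigidBotHom (g : TermGraph S.bot N) (hd : d ≠ 0) :
    IsRigidBotHom (g.trunc d) g (truncHom g d) := by
  refine ⟨truncHom_isBotHom g hd, ?_⟩
  rintro ⟨n | p, hx⟩ hlab
  · exact trunc_nodePosAcy hd hx hlab
  · exact absurd rfl hlab

theorem trunc_reachable (hg : g.Reachable) (hd : d ≠ 0) : (g.trunc d).Reachable := by
  have hret : ∀ n (hn : g.Retained d n), ∃ π, (g.trunc d).IsPos π ⟨Sum.inl n, hn⟩ := by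
    intro n hn
    obtain ⟨π, hπ, -⟩ := exists_mem_nodePosAcy (hg n)
    exact ⟨π, isPos_trunc_of_isAcyclicPos hd hn hπ.1 hπ.2⟩
  rintro ⟨n | p, hx⟩
  · exact hret n hx
  · obtain ⟨hp, hi, -⟩ := (isFringe_iff hd).mp hx
    obtain ⟨π, hπ⟩ := hret p.1 hp
    have hstep := hπ.step ⟨p.2, hi⟩
    rw [trunc_suc_of_isFringe (hn := hp) (i := ⟨p.2, hi⟩) hx] at hstep
    exact ⟨_, hstep⟩

theorem isPos_trunc_inr (hd : d ≠ 0) {p : N × ℕ}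
    {hp : Sum.elim (g.Retained d) (g.IsFringe d) (Sum.inr p)} {ρ : List ℕ}
    (h : (g.trunc d).IsPos ρ ⟨Sum.inr p, hp⟩) :
    ∃ π, ρ = π ++ [p.2] ∧ g.IsPos π p.1 := by
  rcases isPos_cases h with ⟨-, hroot⟩ | ⟨π, y, j, rfl, hπ, hy⟩
  · rw [trunc_root_eq hd] at hroot
    exact absurd (congrArg Subtype.val hroot) (by simp)
  · obtain ⟨n, hn, rfl⟩ := TNode.exists_eq_inl_of_ar_pos j.pos
    by_cases hf : g.IsFringe d (n, j)
    · rw [trunc_suc_of_isFringe hf] at hy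
      cases hy
      exact ⟨π, rfl, (truncHom_isBotHom g hd).isPos hπ⟩
    · obtain ⟨_, heq⟩ := trunc_suc_of_not_isFringe hf
      rw [heq] at hy
      exact absurd (congrArg Subtype.val hy) (by simp)

theorem le_botDepth_trunc (htot : g.Total) (hg : g.Reachable) (hd : d ≠ 0) :
    (d : ℕ∞) ≤ (g.trunc d).botDepth := by
  refine le_botDepth_of_forall ?_
  rintro ⟨n | p, hx⟩ hnone
  · exact absurd hnone (htot n)
  · obtain ⟨ρ, hρ, hlen⟩ := exists_isPos_length_eq_depth (trunc_reachable hg hd ⟨_, hx⟩)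
    obtain ⟨π, rfl, hπ⟩ := isPos_trunc_inr hd hρ
    have h₁ := IsFringe.le_depth_add_one hd hx ⟨π, hπ⟩
    have h₂ := depth_le_length hπ
    simp only [List.length_append, List.length_singleton] at hlen
    exact_mod_cast (show d ≤ _ by omega)

end Truncation

section RigidTruncation

variable {S : Signature} {N M : Type} {g : TermGraph S.bot N} {h : TermGraph S.bot M}
  {φ : N → M} {d : ℕ}

theorem IsRigidBotHom.injOn (hφ : IsRigidBotHom g h φ) (hg : g.Reachable) :
    Set.InjOn φ {x | g.lab x ≠ none} := fun x hx y hy he =>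
  eq_of_nodePosAcy_eq (by rw [hφ.2 x hx, hφ.2 y hy, he]) (hg x)

theorem IsRigidBotHom.depth_eq (hφ : IsRigidBotHom g h φ) (hg : g.Reachable) {n : N}
    (hn : g.lab n ≠ none) : h.depth (φ n) = g.depth n := by
  obtain ⟨π, hπ, hl⟩ := exists_mem_nodePosAcy (hg n)
  rw [hφ.2 n hn] at hπ
  obtain ⟨ρ, hρ, hl'⟩ := exists_mem_nodePosAcy ⟨π, hπ.1⟩
  rw [← hφ.2 n hn] at hρ
  exact le_antisymm (hl ▸ depth_le_length hπ.1) (hl' ▸ depth_le_length hρ.1)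

theorem IsRigidBotHom.map_mem_acyPred (hφ : IsRigidBotHom g h φ) {n m : N}
    (hn : g.lab n ≠ none) (hm : m ∈ g.acyPred n) : φ m ∈ h.acyPred (φ n) :=
  let ⟨π, i, hmem, hπ⟩ := hm
  ⟨π, i, hφ.2 n hn ▸ hmem, hφ.1.isPos hπ⟩

theorem IsRigidBotHom.exists_mem_acyPred (hφ : IsRigidBotHom g h φ) {n : N} {m' : M}
    (hn : g.lab n ≠ none) (hm : m' ∈ h.acyPred (φ n)) :
    ∃ m, φ m = m' ∧ m ∈ g.acyPred n := by
  obtain ⟨π, i, hmem, hπ⟩ := hm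
  rw [← hφ.2 n hn] at hmem
  obtain ⟨x, -, hx, -⟩ := hmem.1.exists_of_snoc
  exact ⟨x, (hφ.1.isPos hx).unique hπ, π, i, hmem, hx⟩

theorem IsRigidBotHom.mem_acyPred_of_map (hφ : IsRigidBotHom g h φ) (hg : g.Reachable)
    {n u : N} (hn : g.lab n ≠ none) (hu : g.lab u ≠ none) (hmem : φ n ∈ h.acyPred (φ u)) :
    n ∈ g.acyPred u := by
  obtain ⟨m, hm, hmu⟩ := hφ.exists_mem_acyPred hu hmem
  obtain ⟨-, i, hi, -⟩ := exists_of_mem_acyPred hmu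
  rwa [← hφ.injOn hg (ne_none_of_ar_pos ((Nat.zero_le i).trans_lt hi)) hn hm]

/-- The acyclic position `π ++ [j]` of `φ u` forces `π ++ [i]` to be acyclic as well, and
rigidity pulls it back to `u`. -/
theorem IsRigidBotHom.eq_suc_of_mem_acyPred (hφ : IsRigidBotHom g h φ) {n u : N}
    (hu : g.lab u ≠ none) (hn : n ∈ g.acyPred u) {i : ℕ} (hi : i < S.bot.ar (g.lab n))
    (he : φ u = φ (g.suc n ⟨i, hi⟩)) : u = g.suc n ⟨i, hi⟩ := by
  obtain ⟨π, j, hj, hπ⟩ := hn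
  rw [hφ.2 u hu] at hj
  have hi' : h.IsPos (π ++ [i]) (φ u) := he ▸ hφ.1.isPos (hπ.step ⟨i, hi⟩)
  have hmem : π ++ [i] ∈ g.nodePosAcy u := by
    rw [hφ.2 u hu]
    exact ⟨hi', hj.2.snoc_swap hj.1 hi'⟩
  exact hmem.1.unique (hπ.step ⟨i, hi⟩)

theorem retained_image (hbot : (d : ℕ∞) ≤ g.botDepth) (hg : g.Reachable)
    (hφ : IsRigidBotHom g h φ) {n : N} (hn : g.Retained d n) : h.Retained d (φ n) := by
  induction hn with
  | @shallow n hdep =>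
      exact .shallow (by rwa [hφ.depth_eq hg ((Retained.shallow hdep).lab_ne_none hbot)])
  | pred hnr hm ih => exact ih.pred (hφ.map_mem_acyPred (hnr.lab_ne_none hbot) hm)

theorem retained_preimage (hbot : (d : ℕ∞) ≤ g.botDepth) (hh : h.Reachable)
    (hφ : IsRigidBotHom g h φ) {m : M} (hm : h.Retained d m) :
    ∃ n, g.Retained d n ∧ φ n = m := by
  induction hm with
  | @shallow m hdep =>
      obtain ⟨π, hπ, hl⟩ := exists_isPos_length_eq_depth (hh m)
      rcases hφ.1.isPos_or_bot hπ with ⟨n, hn, rfl⟩ | ⟨π', n, hpre, hn, hnone⟩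
      · exact ⟨n, .shallow ((hl ▸ depth_le_length hn).trans_lt hdep), rfl⟩
      · have h₁ := le_depth_of_lab_eq_none hbot hnone
        have h₂ := (depth_le_length hn).trans hpre.length_le
        omega
  | pred _ hm' ih =>
      obtain ⟨n, hnr, rfl⟩ := ih
      obtain ⟨x, rfl, hxp⟩ := hφ.exists_mem_acyPred (hnr.lab_ne_none hbot) hm'
      exact ⟨x, hnr.pred hxp, rfl⟩

theorem fringe_image (hd : d ≠ 0) (hbot : (d : ℕ∞) ≤ g.botDepth) (hg : g.Reachable)
    (hh : h.Reachable) (hφ : IsRigidBotHom g h φ) {n : N} {i : ℕ}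
    (hf : g.IsFringe d (n, i)) : h.IsFringe d (φ n, i) := by
  obtain ⟨hret, hi, hcond⟩ := (isFringe_iff hd).mp hf
  have hn := hret.lab_ne_none hbot
  have hi' : i < S.bot.ar (h.lab (φ n)) := by rwa [hφ.1.lab_eq n hn]
  refine (isFringe_iff hd).mpr ⟨retained_image hbot hg hφ hret, hi', ?_⟩
  rw [← hφ.1.suc_eq n hn i hi hi']
  by_cases hwret : h.Retained d (φ (g.suc n ⟨i, hi⟩))
  · refine Or.inr ⟨?_, fun hmem => ?_⟩
    · have h₁ := hf.le_depth_add_one hd (hg n)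
      have h₂ := hφ.depth_eq hg hn
      dsimp only at h₁ h₂ ⊢
      omega
    · obtain ⟨u, huret, hu⟩ := retained_preimage hbot hh hφ hwret
      have hu' := huret.lab_ne_none hbot
      have hnu : n ∈ g.acyPred u := hφ.mem_acyPred_of_map hg hn hu' (hu ▸ hmem)
      obtain rfl := hφ.eq_suc_of_mem_acyPred hu' hnu hi hu
      rcases hcond with hnr | ⟨-, hnp⟩
      exacts [hnr huret, hnp hnu]
  · exact Or.inl hwret

theorem fringe_preimage (hd : d ≠ 0) (hbot : (d : ℕ∞) ≤ g.botDepth) (hg : g.Reachable)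
    (hφ : IsRigidBotHom g h φ) {n : N} {i : ℕ} (hret : g.Retained d n)
    (hf : h.IsFringe d (φ n, i)) : g.IsFringe d (n, i) := by
  obtain ⟨-, hi', hcond⟩ := (isFringe_iff hd).mp hf
  have hn := hret.lab_ne_none hbot
  have hi : i < S.bot.ar (g.lab n) := by rwa [← hφ.1.lab_eq n hn]
  have hsuc := hφ.1.suc_eq n hn i hi hi'
  refine (isFringe_iff hd).mpr ⟨hret, hi, ?_⟩
  by_cases hwret : g.Retained d (g.suc n ⟨i, hi⟩)
  · have hwim : h.Retained d (h.suc (φ n) ⟨i, hi'⟩) :=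
      hsuc ▸ retained_image hbot hg hφ hwret
    obtain hnr | ⟨hdep, hnp⟩ := hcond
    · exact absurd hwim hnr
    refine Or.inr ⟨hφ.depth_eq hg hn ▸ hdep, fun hmem => hnp ?_⟩
    rw [← hsuc]
    exact hφ.map_mem_acyPred (hwret.lab_ne_none hbot) hmem
  · exact Or.inl hwret

theorem truncNode_map_mem (hd : d ≠ 0) (hbot : (d : ℕ∞) ≤ g.botDepth) (hg : g.Reachable)
    (hh : h.Reachable) (hφ : IsRigidBotHom g h φ) :
    ∀ x, Sum.elim (g.Retained d) (g.IsFringe d) x →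
      Sum.elim (h.Retained d) (h.IsFringe d) (Sum.map φ (Prod.map φ id) x)
  | Sum.inl _, hx => retained_image hbot hg hφ hx
  | Sum.inr _, hx => fringe_image hd hbot hg hh hφ hx

variable {hmem : ∀ x, Sum.elim (g.Retained d) (g.IsFringe d) x →
  Sum.elim (h.Retained d) (h.IsFringe d) (Sum.map φ (Prod.map φ id) x)}

theorem truncMap_isDHom (hd : d ≠ 0) (hbot : (d : ℕ∞) ≤ g.botDepth) (hg : g.Reachable)
    (hφ : IsRigidBotHom g h φ) :
    IsDHom ∅ (g.trunc d) (h.trunc d) (Subtype.map (Sum.map φ (Prod.map φ id)) hmem) := by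
  refine ⟨?_, ?_, ?_⟩
  · rw [trunc_root_eq hd, trunc_root_eq hd]
    exact Subtype.ext (congrArg Sum.inl hφ.1.root_eq)
  · rintro ⟨n | p, hx⟩ -
    · exact hφ.1.lab_eq n (Retained.lab_ne_none hbot hx)
    · rfl
  · rintro ⟨n | p, hx⟩ - i hi hi'
    · have hn := Retained.lab_ne_none hbot hx
      by_cases hf : g.IsFringe d (n, i)
      · rw [trunc_suc_of_isFringe (i := ⟨i, hi⟩) hf]
        exact (trunc_suc_of_isFringe (i := ⟨i, hi'⟩) (hmem (Sum.inr (n, i)) hf)).symm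
      · obtain ⟨_, heq⟩ := trunc_suc_of_not_isFringe (i := ⟨i, hi⟩) hf
        have hf' : ¬ h.IsFringe d (φ n, i) := fun hc => hf (fringe_preimage hd hbot hg hφ hx hc)
        obtain ⟨_, heq'⟩ := trunc_suc_of_not_isFringe (hn := hmem _ hx) (i := ⟨i, hi'⟩) hf'
        rw [heq]
        refine (heq'.trans (Subtype.ext ?_)).symm
        exact congrArg Sum.inl (hφ.1.suc_eq n hn i hi hi').symm
    · exact absurd hi (Nat.not_lt_zero i)

theorem truncMap_injective (hd : d ≠ 0) (hbot : (d : ℕ∞) ≤ g.botDepth) (hg : g.Reachable)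
    (hφ : IsRigidBotHom g h φ) :
    Function.Injective (Subtype.map (Sum.map φ (Prod.map φ id)) hmem) := by
  have hinj := hφ.injOn hg
  rintro ⟨n | p, hx⟩ ⟨m | q, hy⟩ he <;> have he' := congrArg Subtype.val he <;>
    simp only [Subtype.map, Sum.map_inl, Sum.map_inr, Prod.map, id, reduceCtorEq,
      Sum.inl.injEq, Sum.inr.injEq, Prod.mk.injEq] at he'
  · exact Subtype.ext (congrArg Sum.inl (hinj (hx.lab_ne_none hbot) (hy.lab_ne_none hbot) he'))
  · have hp := ((isFringe_iff hd).mp hx).1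
    have hq := ((isFringe_iff hd).mp hy).1
    refine Subtype.ext (congrArg Sum.inr (Prod.ext ?_ he'.2))
    exact hinj (hp.lab_ne_none hbot) (hq.lab_ne_none hbot) he'.1

theorem truncMap_surjective (hd : d ≠ 0) (hbot : (d : ℕ∞) ≤ g.botDepth) (hg : g.Reachable)
    (hh : h.Reachable) (hφ : IsRigidBotHom g h φ) :
    Function.Surjective (Subtype.map (Sum.map φ (Prod.map φ id)) hmem) := by
  rintro ⟨m | q, hy⟩
  · obtain ⟨n, hn, rfl⟩ := retained_preimage hbot hh hφ hy
    exact ⟨⟨Sum.inl n, hn⟩, rfl⟩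
  · obtain ⟨n, hn, hnq⟩ := retained_preimage hbot hh hφ ((isFringe_iff hd).mp hy).1
    have hf : g.IsFringe d (n, q.2) := fringe_preimage hd hbot hg hφ hn (hnq ▸ hy)
    exact ⟨⟨Sum.inr (n, q.2), hf⟩, Subtype.ext (congrArg Sum.inr (Prod.ext hnq rfl))⟩

theorem trunc_iso_of_isRigidBotHom (hd : d ≠ 0) (hbot : (d : ℕ∞) ≤ g.botDepth)
    (hg : g.Reachable) (hh : h.Reachable) (hφ : IsRigidBotHom g h φ) :
    Iso (g.trunc d) (h.trunc d) :=
  (truncMap_isDHom (hmem := truncNode_map_mem hd hbot hg hh hφ) hd hbot hg hφ).iso_of_bijective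
    ⟨truncMap_injective hd hbot hg hφ, truncMap_surjective hd hbot hg hh hφ⟩

end RigidTruncation

section Canonical

variable {S : Signature} {N M : Type}

def emap (G : TermGraph S N) (e : N ≃ M) : TermGraph S M where
  lab m := G.lab (e.symm m)
  suc m i := e (G.suc (e.symm m) i)
  root := e G.root

theorem emap_isDHom (G : TermGraph S N) (e : N ≃ M) : IsDHom ∅ G (G.emap e) e where
  root_eq := rfl
  lab_eq n _ := congrArg G.lab (e.symm_apply_apply n)
  suc_eq n _ _ hi hi' := congrArg e (suc_congr (e.symm_apply_apply n).symm hi hi')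

theorem emap_symm_isDHom (G : TermGraph S N) (e : N ≃ M) : IsDHom ∅ (G.emap e) G e.symm where
  root_eq := e.symm_apply_apply G.root
  lab_eq _ _ := rfl
  suc_eq _ _ _ _ _ := e.symm_apply_apply _

theorem nodePos_injective {G : TermGraph S N} (hr : G.Reachable) :
    Function.Injective G.nodePos := fun a b hab =>
  let ⟨π, hπ⟩ := hr a
  hπ.unique (show π ∈ G.nodePos b from hab ▸ hπ)

theorem exists_ctg_iso (G : TermGraph S.bot N) (hr : G.Reachable) :
    ∃ c : CTG S.bot, Iso G c.tg := by
  let e := Equiv.ofInjective G.nodePos (nodePos_injective hr)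
  have hφ : IsBotHom G (G.emap e) e := (emap_isDHom G e).mono
  have hψ : IsBotHom (G.emap e) G e.symm := (emap_symm_isDHom G e).mono
  have hpos : ∀ n, (G.emap e).nodePos (e n) = G.nodePos n := fun n =>
    Set.ext fun π => ⟨fun hp => e.symm_apply_apply n ▸ hψ.isPos hp, hφ.isPos⟩
  refine ⟨⟨_, G.emap e, fun x => ?_, fun x => ?_⟩,
    (emap_isDHom G e).iso_of_bijective e.bijective⟩
  · obtain ⟨n, rfl⟩ := e.surjective x
    obtain ⟨π, hπ⟩ := hr n
    exact ⟨π, hφ.isPos hπ⟩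
  · obtain ⟨n, rfl⟩ := e.surjective x
    rw [hpos n]
    rfl

end Canonical

end TermGraph

namespace CTG

open TermGraph

variable {S : Signature} {g h t : CTG S.bot} {d : ℕ}

theorem LeR.of_iso (hiso : TermGraph.Iso g.tg h.tg) : g.LeR h :=
  hiso.exists_isRigidBotHom

theorem LeR.botDepth_le (hle : g.LeR h) : g.botDepth ≤ h.botDepth :=
  let ⟨_, hφ⟩ := hle
  hφ.1.botDepth_le h.reach

theorem exists_iso_trunc (g : CTG S.bot) (hg : g.Total) (hd : d ≠ 0) :
    ∃ t : CTG S.bot, Iso (g.tg.trunc d) t.tg ∧ (d : ℕ∞) ≤ t.botDepth := by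
  obtain ⟨t, hiso⟩ := exists_ctg_iso (g.tg.trunc d) (trunc_reachable g.reach hd)
  obtain ⟨φ, hφ⟩ := hiso.exists_isRigidBotHom
  exact ⟨t, hiso, (le_botDepth_trunc hg g.reach hd).trans (hφ.1.botDepth_le t.reach)⟩

theorem LeR.of_iso_trunc (hd : d ≠ 0) (hiso : Iso t.tg (g.tg.trunc d)) : t.LeR g :=
  let ⟨φ, hφ⟩ := hiso.exists_isRigidBotHom
  ⟨truncHom g.tg d ∘ φ, hφ.comp (truncHom_isRigidBotHom g.tg hd)⟩

theorem LeR.trunc_iso (hle : t.LeR g) (hd : d ≠ 0) (hbot : (d : ℕ∞) ≤ t.botDepth) :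
    Iso (t.tg.trunc d) (g.tg.trunc d) :=
  let ⟨_, hφ⟩ := hle
  trunc_iso_of_isRigidBotHom hd hbot t.reach g.reach hφ

/-- Both truncations at depth `k` are recovered from a canonical copy of the truncation at
depth `m`. -/
theorem trunc_iso_of_le (hg : g.Total) (hh : h.Total) {m k : ℕ} (hk : k ≠ 0) (hkm : k ≤ m)
    (hiso : Iso (g.tg.trunc m) (h.tg.trunc m)) : Iso (g.tg.trunc k) (h.tg.trunc k) := by
  have hm : m ≠ 0 := by omega
  obtain ⟨G, hG, hGbot⟩ := exists_iso_trunc g hg hm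
  obtain ⟨H, hH, -⟩ := exists_iso_trunc h hh hm
  have hGk : (k : ℕ∞) ≤ G.botDepth := (Nat.cast_le.mpr hkm).trans hGbot
  have hGH : G.LeR H := .of_iso ((hG.symm.trans hiso).trans hH)
  have hHh : H.LeR h := .of_iso_trunc hm hH.symm
  exact ((LeR.of_iso_trunc hm hG.symm).trunc_iso hk hGk).symm.trans
    ((hGH.trunc_iso hk hGk).trans (hHh.trunc_iso hk (hGk.trans hGH.botDepth_le)))

theorem rdist_lt_of_trunc_iso {k : ℕ} (hiso : Iso (g.tg.trunc k) (h.tg.trunc k)) {ε : ℝ}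
    (hε : (1 / 2 : ℝ) ^ k < ε) : rdist g h < ε := by
  have hle : (k : ℕ∞) ≤ simr g h :=
    le_sSup ⟨fun ht => absurd ht (ENat.natCast_ne_top k), fun k' hk' => by
      rwa [← ENat.natCast_inj.mp hk']⟩
  rw [rdist]
  split_ifs with hs
  · exact (pow_pos (by norm_num) k).trans hε
  · refine lt_of_le_of_lt (pow_le_pow_of_le_one (by norm_num) (by norm_num) ?_) hε
    rw [← ENat.natCast_toNat hs] at hle
    exact_mod_cast hle

theorem trunc_iso_of_rdist_lt (hg : g.Total) (hh : h.Total) {k : ℕ} (hk : k ≠ 0)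
    (hlt : rdist g h < (1 / 2 : ℝ) ^ k) : Iso (g.tg.trunc k) (h.tg.trunc k) := by
  have hsim : (k : ℕ∞) < simr g h := by
    by_cases hs : simr g h = ⊤
    · rw [hs]
      exact ENat.natCast_lt_top k
    · rw [rdist, if_neg hs] at hlt
      rw [← ENat.natCast_toNat hs, ENat.natCast_lt_natCast]
      by_contra hc
      exact hlt.not_ge (pow_le_pow_of_le_one (by norm_num) (by norm_num) (not_lt.mp hc))
  obtain ⟨D, hD, hkD⟩ := lt_sSup_iff.mp hsim
  induction D using ENat.recTopCoe with
  | top =>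
      exact (LeR.of_iso (hD.1 rfl)).trunc_iso hk
        (le_botDepth_of_forall fun n hn => absurd hn (hg n))
  | coe m => exact trunc_iso_of_le hg hh hk (ENat.natCast_lt_natCast.mp hkD).le (hD.2 m rfl)

variable {α : Ordinal.{0}} {f : Ordinal.{0} → CTG S.bot} {k : ℕ}

theorem OrdCauchy.exists_tail_trunc_iso (hC : OrdCauchy α f) (hf : ∀ ι < α, (f ι).Total)
    (hk : k ≠ 0) :
    ∃ β < α, ∀ ι, β ≤ ι → ι < α → Iso ((f β).tg.trunc k) ((f ι).tg.trunc k) := by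
  obtain ⟨β₀, hβ₀, hsmall⟩ := hC _ (pow_pos (by norm_num : (0 : ℝ) < 1 / 2) k)
  -- the Cauchy condition only compares indices above `β₀`; if `β₀` is the last index,
  -- the tail from `β₀` is a single term
  by_cases hsucc : Order.succ β₀ < α
  · refine ⟨Order.succ β₀, hsucc, fun ι h₁ h₂ => ?_⟩
    rcases h₁.eq_or_lt with rfl | h₁
    · exact Iso.refl _
    · exact trunc_iso_of_rdist_lt (hf _ hsucc) (hf ι h₂) hk
        (hsmall _ ι (Order.lt_succ β₀) h₁ h₂)
  · refine ⟨β₀, hβ₀, fun ι h₁ h₂ => ?_⟩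
    obtain rfl : ι = β₀ :=
      le_antisymm (Order.lt_succ_iff.mp (h₂.trans_le (not_lt.mp hsucc))) h₁
    exact Iso.refl _

theorem IsLiminfR.trunc_iso_of_tail {L : CTG S.bot} (hL : IsLiminfR α f L) (hk : k ≠ 0)
    {β : Ordinal.{0}} (hβ : β < α) (hfβ : (f β).Total)
    (htail : ∀ ι, β ≤ ι → ι < α → Iso ((f β).tg.trunc k) ((f ι).tg.trunc k)) :
    (k : ℕ∞) ≤ L.botDepth ∧
      ∀ ι, β ≤ ι → ι < α → Iso ((f ι).tg.trunc k) (L.tg.trunc k) := by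
  obtain ⟨inf, hglb, hlub⟩ := hL
  obtain ⟨t, ht, htbot⟩ := exists_iso_trunc (f β) hfβ hk
  have htlb : IsLB {g | ∃ ι, β ≤ ι ∧ ι < α ∧ g = f ι} t := by
    rintro _ ⟨ι, h₁, h₂, rfl⟩
    exact .of_iso_trunc hk (ht.symm.trans (htail ι h₁ h₂))
  have hinf : (k : ℕ∞) ≤ (inf β).botDepth := htbot.trans ((hglb β hβ).2 t htlb).botDepth_le
  have hinfL : (inf β).LeR L := hlub.1 _ ⟨β, hβ, rfl⟩
  refine ⟨hinf.trans hinfL.botDepth_le, fun ι h₁ h₂ => ?_⟩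
  have hinfι : (inf β).LeR (f ι) := (hglb β hβ).1 _ ⟨ι, h₁, h₂, rfl⟩
  exact (hinfι.trunc_iso hk hinf).symm.trans (hinfL.trunc_iso hk hinf)

end CTG

open CTG TermGraph

theorem cauchy_limit_eq_liminf_general (S : Signature) (α : Ordinal.{0})
    (f : Ordinal.{0} → CTG S.bot) (hf : ∀ ι < α, (f ι).Total)
    (hC : CTG.OrdCauchy α f) (L : CTG S.bot) (hL : CTG.IsLiminfR α f L) :
    L.Total ∧ CTG.OrdTendsto α f L := by
  have hconv : ∀ k : ℕ, k ≠ 0 → ∃ β < α, (k : ℕ∞) ≤ L.botDepth ∧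
      ∀ ι, β ≤ ι → ι < α → Iso ((f ι).tg.trunc k) (L.tg.trunc k) := fun k hk =>
    let ⟨β, hβ, htail⟩ := hC.exists_tail_trunc_iso hf hk
    ⟨β, hβ, hL.trunc_iso_of_tail hk hβ (hf β hβ) htail⟩
  refine ⟨total_of_forall_le_botDepth fun k hk => (hconv k hk).choose_spec.2.1,
    fun ε hε => ?_⟩
  obtain ⟨k, hk⟩ := exists_pow_lt_of_lt_one hε (by norm_num : (1 / 2 : ℝ) < 1)
  obtain ⟨β, hβ, -, hiso⟩ := hconv (k + 1) k.succ_ne_zero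
  have hε' : (1 / 2 : ℝ) ^ (k + 1) < ε :=
    (pow_le_pow_of_le_one (by norm_num) (by norm_num) k.le_succ).trans_lt hk
  exact ⟨β, hβ, fun ι h₁ h₂ => rdist_lt_of_trunc_iso (hiso ι h₁.le h₂) hε'⟩

/-- Every non-empty Cauchy sequence (indexed by an ordinal `α`)
of total canonical term graphs converges w.r.t. the rigid distance `d†`, and its
limit equals its limit inferior computed in the complete semilattice of
canonical partial term graphs ordered by `≤⊥r`. -/
theorem cauchy_limit_eq_liminf (S : Signature) (α : Ordinal.{0}) (hα : α ≠ 0)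
    (f : Ordinal.{0} → CTG S.bot) (hf : ∀ ι < α, (f ι).Total)
    (hC : CTG.OrdCauchy α f) (L : CTG S.bot) (hL : CTG.IsLiminfR α f L) :
    L.Total ∧ CTG.OrdTendsto α f L :=
  cauchy_limit_eq_liminf_general S α f hf hC L hL

end TGR
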